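/- arXiv:1708.09800 — 8 statements merged into one kernel-verified Lean document; each statement's English description precedes it below -/
import Mathlib

section
/- Let L be a commutative semiring (with 0 and 1) whose addition is idempotent and which satisfies the incline absorption law a + a*b = a for all a, b, with the incline order defined by x ≤ y iff x + y = y. Assume L has the unique square root property and the LI-property. Then the square root function is increasing: if x, y, c, d ∈ L satisfy x ≤ y, c*c = x and d*d = y, then c ≤ d. -/
theorem mul_self_injective_of_existsUnique {M : Type*} [Mul M]
    (hsq : ∀ x : M, ∃! c : M, c * c = x) : Function.Injective fun c : M => c * c :=
  fun _ _ h => (hsq _).unique h rfl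

theorem stmt_2_general {L : Type*} [CommSemiring L]
    (habs : ∀ a b : L, a + a * b = a)
    (hLI : ∀ x y : L, x + y = y → ∃ z : L, x = y * z)
    (hsq : ∀ x : L, ∃! c : L, c * c = x)
    (x y c d : L) (hxy : x + y = y) (hc : c * c = x) (hd : d * d = y) :
    c + d = d := by
  obtain ⟨z, hz⟩ := hLI x y hxy
  obtain ⟨s, hs, -⟩ := hsq z
  have hcd : c = d * s := mul_self_injective_of_existsUnique hsq <| show c * c = d * s * (d * s) by
    rw [hc, hz, ← hd, ← hs]; ring
  rw [hcd, add_comm, habs]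

/-- In a commutative incline with the unique square root property
and the LI-property, the square root function is increasing w.r.t. the incline
order `x ≤ y ↔ x + y = y`. -/
theorem stmt_2 {L : Type*} [CommSemiring L]
    (hidem : ∀ a : L, a + a = a)
    (habs : ∀ a b : L, a + a * b = a)
    (hLI : ∀ x y : L, x + y = y → ∃ z : L, x = y * z)
    (hsq : ∀ x : L, ∃! c : L, c * c = x)
    (x y c d : L) (hxy : x + y = y) (hc : c * c = x) (hd : d * d = y) :
    c + d = d :=
  stmt_2_general habs hLI hsq x y c d hxy hc hd
end

section
/- Let L be a commutative semiring (with 0 and 1) whose addition is idempotent and which satisfies the incline absorption law a + a*b = a for all a, b, with the incline order defined by x ≤ y iff x + y = y. If the incline order on L is total (for all x, y ∈ L, x ≤ y or y ≤ x), then L has the AG-property: x*y ≤ x*x + y*y for all x, y ∈ L. -/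
theorem stmt_3_general {L : Type*} [CommSemiring L]
    (htot : ∀ x y : L, x + y = y ∨ y + x = x) :
    ∀ x y : L, x * y + (x * x + y * y) = x * x + y * y := by
  intro x y
  rcases htot x y with hxy | hyx
  · have hy : x * y + y * y = y * y := by rw [← add_mul, hxy]
    rw [add_left_comm, hy]
  · have hx : x * y + x * x = x * x := by rw [← mul_add, hyx]
    rw [← add_assoc, hx]

/-- If the incline order (`x ≤ y ↔ x + y = y`) on a commutative
incline is total, then the incline has the AG-property: `x*y ≤ x*x + y*y`. -/
theorem stmt_3 {L : Type*} [CommSemiring L]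
    (hidem : ∀ a : L, a + a = a)
    (habs : ∀ a b : L, a + a * b = a)
    (htot : ∀ x y : L, x + y = y ∨ y + x = x) :
    ∀ x y : L, x * y + (x * x + y * y) = x * x + y * y :=
  stmt_3_general htot
end

section
/- Let L be a commutative semiring (with 0 and 1) whose addition is idempotent and which satisfies the incline absorption law a + a*b = a for all a, b, and suppose L has the AG-property (x*y ≤ x*x + y*y for all x, y, where x ≤ y iff x + y = y). Then for every k ≥ 1 and every family x₁, …, x_k ∈ L, the sum of the squares equals the square of the sum: x₁*x₁ + ⋯ + x_k*x_k = (x₁ + ⋯ + x_k)*(x₁ + ⋯ + x_k). -/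
/-! The AG-property absorbs the cross term `a * b + a * b = a * b` of `(a + b) * (a + b)`, so
squaring is additive; a sum of squares is then the square of the sum by `map_sum`. -/

section IdempotentAG

variable {L : Type*} [CommSemiring L]

theorem add_mul_self_eq_mul_self_add_mul_self
    (hidem : ∀ a : L, a + a = a)
    (hAG : ∀ x y : L, x * y + (x * x + y * y) = x * x + y * y)
    (a b : L) : (a + b) * (a + b) = a * a + b * b := by
  calc (a + b) * (a + b) = a * b + a * b + (a * a + b * b) := by ring
    _ = a * a + b * b := by rw [hidem, hAG]

def mulSelfAddHom
    (hidem : ∀ a : L, a + a = a)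
    (hAG : ∀ x y : L, x * y + (x * x + y * y) = x * x + y * y) : L →+ L where
  toFun a := a * a
  map_zero' := mul_zero 0
  map_add' := add_mul_self_eq_mul_self_add_mul_self hidem hAG

end IdempotentAG

theorem stmt_5_general {L : Type*} [CommSemiring L]
    (hidem : ∀ a : L, a + a = a)
    (hAG : ∀ x y : L, x * y + (x * x + y * y) = x * x + y * y)
    (k : ℕ) (x : Fin k → L) :
    (∑ i, x i * x i) = (∑ i, x i) * (∑ i, x i) :=
  (map_sum (mulSelfAddHom hidem hAG) x Finset.univ).symm

/-- In a commutative incline with the AG-property, the sum of the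
squares of any finite family (k ≥ 1) equals the square of the sum. -/
theorem stmt_5 {L : Type*} [CommSemiring L]
    (hidem : ∀ a : L, a + a = a)
    (habs : ∀ a b : L, a + a * b = a)
    (hAG : ∀ x y : L, x * y + (x * x + y * y) = x * x + y * y)
    (k : ℕ) (hk : 1 ≤ k) (x : Fin k → L) :
    (∑ i, x i * x i) = (∑ i, x i) * (∑ i, x i) :=
  stmt_5_general hidem hAG k x
end

section
/- Let L be a normal incline and let A be an n×n symmetric matrix over L (Aᵀ = A). Then the following are equivalent: (1) A is positive semidefinite, i.e., there exist m ∈ ℕ and an n×m matrix B over L with A = B * Bᵀ; (2) A is completely positive, i.e., there exist m ∈ ℕ and an n×m matrix B over L with A = B * Bᵀ in which every entry of B is a square (for each entry b there is c ∈ L with b = c*c); (3) every 2×2 principal submatrix of A has its positive determinant greater than or equal to its negative determinant, i.e., A i j * A j i ≤ A i i * A j j for all i, j; (4) there exist a diagonal matrix D over L and a symmetric matrix M over L with M i i = 1 for all i, such that A = D * M * D. -/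
/-!
A normal incline is an idempotent commutative semiring, in which a finite sum is the supremum
of its terms. If `A = B * Bᵀ`, every term of `A i j * A j i` has the form `x * y` where `x * x`
and `y * y` are terms of `A i i * A j j`, so the AG-property gives `A i j * A j i ≤ A i i * A j j`.
Conversely, with `d i` the square root of `A i i` this inequality reads `(A i j)² ≤ (d i * d j)²`.
By the AG-property `(a + b)² = a² + b²`, so `a² ≤ b²` forces `(a + b)² = b²` and, square roots
being unique, `a ≤ b`; hence `A i j ≤ d i * d j`, and the LI-property factors `A` as `D * M * D`.
Finally `D * M * D` is the supremum, over pairs `(p, q)`, of the rank-one matrices `v * vᵀ` where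
`v` is supported on `{p, q}` with entries `d p * √(M p q)` and `d q * √(M p q)`.
-/

open Matrix Finset

section IdemSemiring

variable {α ι : Type*} [IdemSemiring α]

theorem Finset.sum_le_of_forall_le {s : Finset ι} {f : ι → α} {c : α}
    (h : ∀ i ∈ s, f i ≤ c) : ∑ i ∈ s, f i ≤ c :=
  Finset.sum_induction f (· ≤ c) (fun _ _ => add_le) zero_le h

theorem Fintype.sum_eq_of_forall_le_of_eq [Fintype ι] {f : ι → α} {c : α}
    (h : ∀ i, f i ≤ c) (i : ι) (hi : f i = c) : ∑ i, f i = c :=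
  le_antisymm (Finset.sum_le_of_forall_le fun i _ => h i)
    (hi ▸ single_le_sum_of_canonicallyOrdered (mem_univ i))

theorem Fintype.le_sum_sum {κ : Type*} [Fintype ι] [Fintype κ] (f : ι → κ → α) (i : ι) (k : κ) :
    f i k ≤ ∑ i, ∑ k, f i k :=
  (single_le_sum_of_canonicallyOrdered (f := f i) (mem_univ k)).trans
    (single_le_sum_of_canonicallyOrdered (f := fun i => ∑ k, f i k) (mem_univ i))

theorem le_of_mul_self_le_mul_self {α : Type*} [IdemCommSemiring α]
    (hinj : Function.Injective fun a : α => a * a)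
    (hAG : ∀ x y : α, x * y ≤ x * x + y * y) {a b : α} (h : a * a ≤ b * b) : a ≤ b := by
  have hsq : (a + b) * (a + b) = b * b := by
    calc (a + b) * (a + b) = (a * b + a * b) + (a * a + b * b) := by ring
      _ = a * b + (a * a + b * b) := by rw [add_idem]
      _ = b * b := by rw [(hAG a b).add_eq_right, h.add_eq_right]
  exact add_eq_right_iff_le.1 (hinj hsq)

end IdemSemiring

theorem Matrix.exists_fin_mul_transpose_eq {α n ι : Type*} [AddCommMonoid α] [Mul α] [Fintype ι]
    (B : Matrix n ι α) : ∃ (m : ℕ) (B' : Matrix n (Fin m) α), B' * B'ᵀ = B * Bᵀ :=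
  ⟨_, B.submatrix id (Fintype.equivFin ι).symm, by
    rw [transpose_submatrix, submatrix_mul_equiv, submatrix_id_id]⟩

section Incline

variable {L n : Type*} [IdemCommSemiring L]

theorem mul_transpose_apply_mul_le {m : Type*} [Fintype m]
    (hAG : ∀ x y : L, x * y ≤ x * x + y * y) (B : Matrix n m L) (i j : n) :
    (B * Bᵀ) i j * (B * Bᵀ) j i ≤ (B * Bᵀ) i i * (B * Bᵀ) j j := by
  simp only [mul_apply, transpose_apply, sum_mul_sum]
  have hterm (k l : m) : B i k * B j l * (B i k * B j l) ≤
      ∑ k, ∑ l, B i k * B i k * (B j l * B j l) := by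
    calc B i k * B j l * (B i k * B j l) = B i k * B i k * (B j l * B j l) := by ring
      _ ≤ _ := Fintype.le_sum_sum (fun k l => B i k * B i k * (B j l * B j l)) k l
  refine sum_le_of_forall_le fun k _ => sum_le_of_forall_le fun l _ => ?_
  calc B i k * B j k * (B j l * B i l) = B i k * B j l * (B i l * B j k) := by ring
    _ ≤ _ := hAG _ _
    _ ≤ _ := add_le (hterm k l) (by simpa only [mul_comm (B j k)] using hterm l k)

variable [Fintype n] [DecidableEq n]

theorem diagonal_mul_mul_diagonal_apply (d : n → L) (M : Matrix n n L) (i j : n) :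
    (diagonal d * M * diagonal d) i j = d i * M i j * d j := by
  rw [mul_diagonal, diagonal_mul]

theorem exists_eq_diagonal_mul_mul_diagonal
    (hLI : ∀ x y : L, x ≤ y → ∃ z, x = y * z) (hsq : ∀ x : L, ∃! c, c * c = x)
    (hAG : ∀ x y : L, x * y ≤ x * x + y * y) {A : Matrix n n L} (hA : Aᵀ = A)
    (h : ∀ i j, A i j * A j i ≤ A i i * A j j) :
    ∃ (d : n → L) (M : Matrix n n L), Mᵀ = M ∧ (∀ i, M i i = 1) ∧
      A = diagonal d * M * diagonal d := by
  choose d hd using fun i => (hsq (A i i)).exists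
  have hsymm (i j : n) : A j i = A i j := congrFun (congrFun hA i) j
  have hle (i j : n) : A i j ≤ d i * d j := by
    refine le_of_mul_self_le_mul_self (fun _ _ hab => (hsq _).unique hab rfl) hAG ?_
    calc A i j * A i j = A i j * A j i := by rw [hsymm]
      _ ≤ A i i * A j j := h i j
      _ = d i * d j * (d i * d j) := by rw [mul_mul_mul_comm, hd, hd]
  choose z hz using fun i j => hLI _ _ (hle i j)
  refine ⟨d, of fun i j => if i = j then 1 else z i j + z j i, ?_, fun i => if_pos rfl, ?_⟩
  · ext i j
    simp only [transpose_apply, of_apply, eq_comm, add_comm]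
  · ext i j
    rw [diagonal_mul_mul_diagonal_apply, of_apply]
    split_ifs with hij
    · rw [hij, mul_one, hd]
    · calc A i j = A i j + A j i := by rw [hsymm, add_idem]
        _ = _ := by rw [hz i j, hz j i]; ring

theorem exists_eq_mul_transpose_of_eq_diagonal_mul_mul_diagonal
    (habs : ∀ a b : L, a * b ≤ a) (hsq : ∀ x : L, ∃ c, c * c = x)
    (d : n → L) {M : Matrix n n L} (hM : Mᵀ = M) (hM1 : ∀ i, M i i = 1) :
    ∃ B : Matrix n (n × n) L, diagonal d * M * diagonal d = B * Bᵀ := by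
  choose w hw using fun p : n × n => hsq (M p.1 p.2)
  refine ⟨of fun i p => if i = p.1 ∨ i = p.2 then d i * w p else 0, ?_⟩
  ext i j
  rw [diagonal_mul_mul_diagonal_apply, mul_apply]
  refine (Fintype.sum_eq_of_forall_le_of_eq (fun p => ?_) (i, j) ?_).symm
  · obtain ⟨a, b⟩ := p
    simp only [transpose_apply, of_apply]
    split_ifs with hi hj
    · rw [mul_mul_mul_comm, hw]
      have hMba : M b a = M a b := congrFun (congrFun hM a) b
      obtain rfl | rfl := hi <;> obtain rfl | rfl := hj
      · rw [hM1, mul_one]; exact habs _ _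
      · exact (mul_right_comm _ _ _).le
      · rw [hMba, mul_right_comm]
      · rw [hM1, mul_one]; exact habs _ _
    all_goals simp only [zero_mul, mul_zero, zero_le]
  · simp only [transpose_apply, of_apply, true_or, or_true, if_true]
    rw [mul_mul_mul_comm, hw]; ring

end Incline

/-- Characterization of completely positive matrices over a normal
incline: for a symmetric matrix `A` over a normal incline `L`, the following
are equivalent: (1) `A` is positive semidefinite; (2) `A` is completely
positive; (3) every 2×2 principal submatrix has `det⁺ ≥ det⁻`; (4) `A = D*M*D`
with `D` diagonal and `M` symmetric with unit diagonal. -/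
theorem stmt_6 {L : Type*} [CommSemiring L]
    (hidem : ∀ a : L, a + a = a)
    (habs : ∀ a b : L, a + a * b = a)
    (hLI : ∀ x y : L, x + y = y → ∃ z : L, x = y * z)
    (hsq : ∀ x : L, ∃! c : L, c * c = x)
    (hAG : ∀ x y : L, x * y + (x * x + y * y) = x * x + y * y)
    (n : ℕ) (A : Matrix (Fin n) (Fin n) L) (hsymm : Aᵀ = A) :
    [ (∃ m : ℕ, ∃ B : Matrix (Fin n) (Fin m) L, A = B * Bᵀ),
      (∃ m : ℕ, ∃ B : Matrix (Fin n) (Fin m) L, A = B * Bᵀ ∧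
        ∀ i j, ∃ c : L, B i j = c * c),
      (∀ i j : Fin n, A i j * A j i + A i i * A j j = A i i * A j j),
      (∃ D M : Matrix (Fin n) (Fin n) L, D.IsDiag ∧ Mᵀ = M ∧
        (∀ i, M i i = 1) ∧ A = D * M * D) ].TFAE := by
  -- The order of this structure is `x ≤ y ↔ x + y = y` by definition, i.e. the incline order.
  let _ : IdemCommSemiring L := { ‹CommSemiring L›, IdemSemiring.ofSemiring hidem with }
  tfae_have 1 → 2 := fun ⟨m, B, hB⟩ =>
    ⟨m, B, hB, fun i j => (hsq (B i j)).exists.imp fun _ hc => hc.symm⟩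
  tfae_have 2 → 1 := fun ⟨m, B, hB, _⟩ => ⟨m, B, hB⟩
  tfae_have 1 → 3 := fun ⟨_, B, hB⟩ i j => hB ▸ mul_transpose_apply_mul_le hAG B i j
  tfae_have 3 → 4 := fun h =>
    let ⟨d, M, hM, hM1, hA⟩ := exists_eq_diagonal_mul_mul_diagonal hLI hsq hAG hsymm h
    ⟨diagonal d, M, isDiag_diagonal d, hM, hM1, hA⟩
  tfae_have 4 → 1 := by
    rintro ⟨D, M, hD, hM, hM1, rfl⟩
    obtain ⟨B, hB⟩ := exists_eq_mul_transpose_of_eq_diagonal_mul_mul_diagonal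
      (fun a b => (add_comm _ _).trans (habs a b)) (fun x => (hsq x).exists) D.diag hM hM1
    obtain ⟨m, B', hB'⟩ := B.exists_fin_mul_transpose_eq
    exact ⟨m, B', by rw [hB', ← hB, hD.diagonal_diag]⟩
  tfae_finish
end

section
/- Let L be a normal incline and let A be an n×n symmetric matrix over L that is diagonally dominant, i.e., for every index i the sum over all j ≠ i of A i j is ≤ A i i in the incline order. Then A is completely positive: there exist m ∈ ℕ and an n×m matrix B over L with A = B * Bᵀ. -/
/-!
Over a semiring with idempotent addition, every symmetric matrix `A` whose rows sum to their
diagonal entries is `B * Bᵀ` for the matrix `B` with one column for each pair `(k, l)`, carrying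
`√(A k l)` in rows `k` and `l` and `0` elsewhere. The diagonal entry `(B * Bᵀ) i i` adds up every
`A k l` with `i ∈ {k, l}`: by symmetry this is the `i`-th row sum plus its off-diagonal part, and
the row-sum condition, used twice, brings it back to `A i i`. An off-diagonal entry
`(B * Bᵀ) i j` only sees the columns `(i, j)` and `(j, i)`, giving `A i j + A j i = A i j` by
idempotence. Diagonal dominance in the incline order says exactly that the rows sum to their
diagonal entries.
-/

open Matrix

namespace Matrix

variable {ι L : Type*} [CommSemiring L]

section PairRootFactor

variable [DecidableEq ι]

def pairRootFactor (r : L → L) (A : Matrix ι ι L) : Matrix ι (ι × ι) L :=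
  of fun i q => if i = q.1 ∨ i = q.2 then r (A q.1 q.2) else 0

theorem pairRootFactor_mul_apply {r : L → L} (hr : ∀ x, r x * r x = x) (A : Matrix ι ι L)
    (i j : ι) (q : ι × ι) :
    pairRootFactor r A i q * pairRootFactor r A j q =
      if (i = q.1 ∨ i = q.2) ∧ (j = q.1 ∨ j = q.2) then A q.1 q.2 else 0 := by
  simp only [pairRootFactor, of_apply]
  split_ifs <;> simp_all

variable [Fintype ι]

theorem sum_row_eq_diag_of_sum_erase_add {A : Matrix ι ι L}
    (hdd : ∀ i, (∑ j ∈ Finset.univ.erase i, A i j) + A i i = A i i) (i : ι) :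
    ∑ j, A i j = A i i := by
  rw [← Finset.sum_erase_add _ _ (Finset.mem_univ i), hdd i]

variable {r : L → L} {A : Matrix ι ι L}

theorem pairRootFactor_mul_transpose_apply_of_ne (hidem : ∀ a : L, a + a = a)
    (hr : ∀ x, r x * r x = x) (hsymm : Aᵀ = A) {i j : ι} (hij : i ≠ j) :
    (pairRootFactor r A * (pairRootFactor r A)ᵀ) i j = A i j := by
  have hsupport : ∀ q ∈ Finset.univ, q ∉ ({(i, j), (j, i)} : Finset (ι × ι)) →
      pairRootFactor r A i q * pairRootFactor r A j q = 0 := by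
    rintro ⟨k, l⟩ - hq
    rw [pairRootFactor_mul_apply hr, if_neg]
    rintro ⟨rfl | rfl, rfl | rfl⟩ <;> simp_all
  simp only [mul_apply, transpose_apply]
  rw [← Finset.sum_subset (Finset.subset_univ _) hsupport,
    Finset.sum_pair (by simp [hij])]
  simp only [pairRootFactor_mul_apply hr, true_or, or_true, and_self, if_true]
  rw [← transpose_apply A, hsymm, hidem]

theorem pairRootFactor_mul_transpose_apply_self (hr : ∀ x, r x * r x = x) (hsymm : Aᵀ = A)
    (hrow : ∀ i, ∑ j, A i j = A i i) (i : ι) :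
    (pairRootFactor r A * (pairRootFactor r A)ᵀ) i i = A i i := by
  have hinner : ∀ k, (∑ l, if i = k ∨ i = l then A k l else 0) = A i k := by
    intro k
    by_cases hk : i = k
    · subst hk
      simp only [true_or, if_true]
      exact hrow i
    · simp only [hk, false_or, Finset.sum_ite_eq, Finset.mem_univ, if_true]
      rw [← transpose_apply A, hsymm]
  simp only [mul_apply, transpose_apply, pairRootFactor_mul_apply hr, and_self]
  rw [Fintype.sum_prod_type]
  simp only [hinner, hrow]

theorem pairRootFactor_mul_transpose (hidem : ∀ a : L, a + a = a) (hr : ∀ x, r x * r x = x)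
    (hsymm : Aᵀ = A) (hrow : ∀ i, ∑ j, A i j = A i i) :
    pairRootFactor r A * (pairRootFactor r A)ᵀ = A := by
  ext i j
  obtain rfl | hij := eq_or_ne i j
  · exact pairRootFactor_mul_transpose_apply_self hr hsymm hrow i
  · exact pairRootFactor_mul_transpose_apply_of_ne hidem hr hsymm hij

end PairRootFactor

theorem exists_fin_mul_transpose_of_mul_transpose {κ : Type*} [Fintype κ]
    {A : Matrix ι ι L} (B : Matrix ι κ L) (hB : A = B * Bᵀ) :
    ∃ m : ℕ, ∃ B' : Matrix ι (Fin m) L, A = B' * B'ᵀ :=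
  ⟨_, B.submatrix id (Fintype.equivFin κ).symm, by
    rw [hB, transpose_submatrix, submatrix_mul_equiv, submatrix_id_id]⟩

end Matrix

theorem stmt_7_general {L : Type*} [CommSemiring L]
    (hidem : ∀ a : L, a + a = a)
    (hsq : ∀ x : L, ∃! c : L, c * c = x)
    (n : ℕ) (A : Matrix (Fin n) (Fin n) L) (hsymm : Aᵀ = A)
    (hdd : ∀ i : Fin n, (∑ j ∈ Finset.univ.erase i, A i j) + A i i = A i i) :
    ∃ m : ℕ, ∃ B : Matrix (Fin n) (Fin m) L, A = B * Bᵀ := by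
  choose r hr _ using hsq
  exact exists_fin_mul_transpose_of_mul_transpose (pairRootFactor r A)
    (pairRootFactor_mul_transpose hidem hr hsymm (sum_row_eq_diag_of_sum_erase_add hdd)).symm

/-- Every symmetric diagonally dominant matrix over a normal
incline is completely positive. -/
theorem stmt_7 {L : Type*} [CommSemiring L]
    (hidem : ∀ a : L, a + a = a)
    (habs : ∀ a b : L, a + a * b = a)
    (hLI : ∀ x y : L, x + y = y → ∃ z : L, x = y * z)
    (hsq : ∀ x : L, ∃! c : L, c * c = x)
    (hAG : ∀ x y : L, x * y + (x * x + y * y) = x * x + y * y)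
    (n : ℕ) (A : Matrix (Fin n) (Fin n) L) (hsymm : Aᵀ = A)
    (hdd : ∀ i : Fin n, (∑ j ∈ Finset.univ.erase i, A i j) + A i i = A i i) :
    ∃ m : ℕ, ∃ B : Matrix (Fin n) (Fin m) L, A = B * Bᵀ :=
  stmt_7_general hidem hsq n A hsymm hdd
end

section
/- Let L be a regular incline (a commutative incline with 0 and 1 in which a*a = a for all a ∈ L) having the LI-property, and let A be an n×n symmetric matrix over L. Then A is positive semidefinite (equivalently completely positive), i.e., there exist m ∈ ℕ and an n×m matrix B over L with A = B * Bᵀ, if and only if A is diagonally dominant, i.e., for every index i the sum over all j ≠ i of A i j is ≤ A i i in the incline order. -/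
/-!
In an incline, `x + y = y` is the order `x ≤ y` and sums are joins. Since `a * a = a`, the
diagonal of `B * Bᵀ` is the row sum `∑ₖ B i k`, which absorbs every `B i k * B j k`, so every
off-diagonal entry lies below the diagonal one. Conversely, a diagonally dominant symmetric `A`
is `F * Fᵀ` where the column of `F` indexed by `(p, q)` carries `A p q` in rows `p` and `q`:
off the diagonal this gives `A i j + A j i = A i j`, and on it the join of entries `A i q`,
`A p i`, all below `A i i`.
-/

open Matrix

namespace Incline

section Dominance

variable {L : Type*} [AddCommMonoid L]

theorem sum_add_eq_of_forall_add_eq {ι : Type*} {s : Finset ι} {f : ι → L} {c : L}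
    (h : ∀ j ∈ s, f j + c = c) : (∑ j ∈ s, f j) + c = c :=
  Finset.sum_induction f (fun x ↦ x + c = c)
    (fun a b ha hb ↦ by rw [add_assoc, hb, ha]) (zero_add c) h

theorem sum_eq_of_mem_of_forall_add_eq {ι : Type*} [DecidableEq ι] {s : Finset ι} {f : ι → L}
    {a : ι} {c : L} (ha : a ∈ s) (hfa : f a = c) (h : ∀ j ∈ s, f j + c = c) :
    ∑ j ∈ s, f j = c := by
  rw [← Finset.sum_erase_add _ _ ha, hfa]
  exact sum_add_eq_of_forall_add_eq fun j hj ↦ h j (Finset.mem_of_mem_erase hj)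

theorem add_sum_eq_sum_of_mem (hidem : ∀ a : L, a + a = a) {ι : Type*} [DecidableEq ι]
    {s : Finset ι} {f : ι → L} {j : ι} (hj : j ∈ s) : f j + ∑ k ∈ s, f k = ∑ k ∈ s, f k := by
  rw [← Finset.add_sum_erase _ _ hj, ← add_assoc, hidem]

variable {ι : Type*} [Fintype ι] [DecidableEq ι]

def IsDiagDominant (A : Matrix ι ι L) : Prop :=
  ∀ i, (∑ j ∈ Finset.univ.erase i, A i j) + A i i = A i i

theorem IsDiagDominant.of_forall_add_diag {A : Matrix ι ι L}
    (h : ∀ i j, A i j + A i i = A i i) : IsDiagDominant A :=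
  fun i ↦ sum_add_eq_of_forall_add_eq fun j _ ↦ h i j

theorem IsDiagDominant.add_diag (hidem : ∀ a : L, a + a = a) {A : Matrix ι ι L}
    (hA : IsDiagDominant A) (i j : ι) : A i j + A i i = A i i := by
  obtain rfl | hji := eq_or_ne j i
  · exact hidem _
  · have hj : j ∈ Finset.univ.erase i := Finset.mem_erase.2 ⟨hji, Finset.mem_univ j⟩
    rw [← hA i, ← add_assoc, add_sum_eq_sum_of_mem hidem hj]

end Dominance

section Gram

variable {L : Type*} [CommSemiring L] {ι κ : Type*} [Fintype κ]

theorem mul_transpose_self_apply_self (hreg : ∀ a : L, a * a = a) (B : Matrix ι κ L) (i : ι) :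
    (B * Bᵀ) i i = ∑ k, B i k := by
  simp only [mul_apply, transpose_apply, hreg]

theorem mul_transpose_self_apply_add_diag (habs : ∀ a b : L, a + a * b = a)
    (hreg : ∀ a : L, a * a = a) (B : Matrix ι κ L) (i j : ι) :
    (B * Bᵀ) i j + (B * Bᵀ) i i = (B * Bᵀ) i i := by
  rw [mul_transpose_self_apply_self hreg, mul_apply, ← Finset.sum_add_distrib]
  exact Finset.sum_congr rfl fun k _ ↦ by rw [transpose_apply, add_comm, habs]

theorem isDiagDominant_mul_transpose_self [Fintype ι] [DecidableEq ι]
    (habs : ∀ a b : L, a + a * b = a) (hreg : ∀ a : L, a * a = a) (B : Matrix ι κ L) :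
    IsDiagDominant (B * Bᵀ) :=
  .of_forall_add_diag (mul_transpose_self_apply_add_diag habs hreg B)

theorem exists_fin_eq_mul_transpose (A : Matrix ι ι L) (B : Matrix ι κ L) (h : A = B * Bᵀ) :
    ∃ m, ∃ B' : Matrix ι (Fin m) L, A = B' * B'ᵀ := by
  refine ⟨Fintype.card κ, B.submatrix id (Fintype.equivFin κ).symm, ?_⟩
  rw [transpose_submatrix, submatrix_mul_equiv, submatrix_id_id, h]

end Gram

section Factorization

variable {L : Type*} [CommSemiring L] {ι : Type*} [Fintype ι] [DecidableEq ι]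

def pairFactor (A : Matrix ι ι L) : Matrix ι (ι × ι) L :=
  of fun i pq ↦ if i = pq.1 ∨ i = pq.2 then A pq.1 pq.2 else 0

theorem ite_mul_ite_self (hreg : ∀ a : L, a * a = a) (P Q : Prop) [Decidable P] [Decidable Q]
    (a : L) : ((if P then a else 0) * if Q then a else 0) = if P ∧ Q then a else 0 := by
  by_cases hP : P <;> by_cases hQ : Q <;> simp [hP, hQ, hreg]

theorem pairFactor_mul_transpose_apply (hreg : ∀ a : L, a * a = a) (A : Matrix ι ι L) (i j : ι) :
    (pairFactor A * (pairFactor A)ᵀ) i j =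
      ∑ pq ∈ Finset.univ.filter fun pq : ι × ι ↦ (i = pq.1 ∨ i = pq.2) ∧ (j = pq.1 ∨ j = pq.2),
        A pq.1 pq.2 := by
  simp only [pairFactor, mul_apply, transpose_apply, of_apply, ite_mul_ite_self hreg,
    Finset.sum_filter]

theorem pairFactor_mul_transpose_apply_self (hidem : ∀ a : L, a + a = a)
    (hreg : ∀ a : L, a * a = a) {A : Matrix ι ι L} (hsymm : A.IsSymm) (hA : IsDiagDominant A)
    (i : ι) : (pairFactor A * (pairFactor A)ᵀ) i i = A i i := by
  rw [pairFactor_mul_transpose_apply hreg]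
  refine sum_eq_of_mem_of_forall_add_eq (a := (i, i)) (by simp) rfl ?_
  rintro ⟨p, q⟩ hpq
  obtain rfl | rfl := (Finset.mem_filter.1 hpq).2.1
  · exact hA.add_diag hidem i q
  · rw [hsymm.apply]
    exact hA.add_diag hidem i p

theorem pairFactor_mul_transpose_apply_of_ne (hidem : ∀ a : L, a + a = a)
    (hreg : ∀ a : L, a * a = a) {A : Matrix ι ι L} (hsymm : A.IsSymm) {i j : ι} (hij : i ≠ j) :
    (pairFactor A * (pairFactor A)ᵀ) i j = A i j := by
  have hpairs : (Finset.univ.filter fun pq : ι × ι ↦ (i = pq.1 ∨ i = pq.2) ∧ (j = pq.1 ∨ j = pq.2))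
      = {(i, j), (j, i)} := by
    ext ⟨p, q⟩
    simp only [Finset.mem_filter, Finset.mem_univ, true_and, Finset.mem_insert,
      Finset.mem_singleton, Prod.mk.injEq]
    grind
  rw [pairFactor_mul_transpose_apply hreg, hpairs, Finset.sum_pair (by simp [hij]), hsymm.apply,
    hidem]

theorem IsDiagDominant.eq_pairFactor_mul_transpose (hidem : ∀ a : L, a + a = a)
    (hreg : ∀ a : L, a * a = a) {A : Matrix ι ι L} (hsymm : A.IsSymm) (hA : IsDiagDominant A) :
    A = pairFactor A * (pairFactor A)ᵀ := by
  ext i j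
  obtain rfl | hij := eq_or_ne i j
  · exact (pairFactor_mul_transpose_apply_self hidem hreg hsymm hA i).symm
  · exact (pairFactor_mul_transpose_apply_of_ne hidem hreg hsymm hij).symm

end Factorization

end Incline

open Incline in
theorem stmt_8_general {L : Type*} [CommSemiring L]
    (hidem : ∀ a : L, a + a = a)
    (habs : ∀ a b : L, a + a * b = a)
    (hreg : ∀ a : L, a * a = a)
    (n : ℕ) (A : Matrix (Fin n) (Fin n) L) (hsymm : Aᵀ = A) :
    (∃ m : ℕ, ∃ B : Matrix (Fin n) (Fin m) L, A = B * Bᵀ) ↔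
      (∀ i : Fin n, (∑ j ∈ Finset.univ.erase i, A i j) + A i i = A i i) := by
  constructor
  · rintro ⟨m, B, rfl⟩
    exact isDiagDominant_mul_transpose_self habs hreg B
  · intro hA
    exact exists_fin_eq_mul_transpose A _
      (IsDiagDominant.eq_pairFactor_mul_transpose hidem hreg hsymm hA)

/-- Over a regular incline with the LI-property, a symmetric
matrix is positive semidefinite (equivalently completely positive) iff it is
diagonally dominant. -/
theorem stmt_8 {L : Type*} [CommSemiring L]
    (hidem : ∀ a : L, a + a = a)
    (habs : ∀ a b : L, a + a * b = a)
    (hreg : ∀ a : L, a * a = a)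
    (hLI : ∀ x y : L, x + y = y → ∃ z : L, x = y * z)
    (n : ℕ) (A : Matrix (Fin n) (Fin n) L) (hsymm : Aᵀ = A) :
    (∃ m : ℕ, ∃ B : Matrix (Fin n) (Fin m) L, A = B * Bᵀ) ↔
      (∀ i : Fin n, (∑ j ∈ Finset.univ.erase i, A i j) + A i i = A i i) :=
  stmt_8_general hidem habs hreg n A hsymm
end

section
/- Let L be a totally ordered normal incline, let n ∈ {2, 3}, and let A be an n×n completely positive matrix over L (A = B * Bᵀ for some n×m matrix B over L). Then the CP-rank of A is at most n: there exists an n×n matrix B' over L with A = B' * B'ᵀ. -/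
/-!
Over an incline the AG-property gives `u k * u l ≤ u ⬝ᵥ u` termwise, hence the Cauchy–Schwarz
inequality `A i j ^ 2 ≤ A i i * A j j` for a Gram matrix `A = B * Bᵀ`. Squaring reflects the
order (by totality and uniqueness of square roots), so `A i j ≤ √(A i i) * √(A j j)`, and the
LI-property writes `A i j = √(A i i) * e` with `e ^ 2 ≤ A j j` by absorption. For `n = 2, 3`
these factors fit into an `n × n` matrix whose rows carry `√(A i i)` and pairwise overlap in a
single column; the remaining squares are absorbed by the diagonal.
-/

open Matrix

namespace Incline

variable {L : Type*} [CommSemiring L]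

local notation:50 x:51 " ≼ " y:51 => x + y = y

theorem le_trans {x y z : L} (hxy : x ≼ y) (hyz : y ≼ z) : x ≼ z := by
  rw [← hyz, ← add_assoc, hxy]

theorem add_le {x y z : L} (hxz : x ≼ z) (hyz : y ≼ z) : x + y ≼ z := by
  rw [add_assoc, hyz, hxz]

theorem mul_le_mul {a b c d : L} (hab : a ≼ b) (hcd : c ≼ d) : a * c ≼ b * d :=
  le_trans (by rw [← add_mul, hab]) (by rw [← mul_add, hcd])

theorem sum_le {ι : Type*} (s : Finset ι) {f : ι → L} {c : L} (h : ∀ i ∈ s, f i ≼ c) :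
    ∑ i ∈ s, f i ≼ c :=
  Finset.sum_induction f (fun x => x ≼ c) (fun _ _ => add_le) (zero_add c) h

theorem single_le_sum (hidem : ∀ a : L, a + a = a) {ι : Type*} {s : Finset ι} (f : ι → L)
    {i : ι} (hi : i ∈ s) : f i ≼ ∑ j ∈ s, f j := by
  classical
  rw [← Finset.add_sum_erase s f hi, ← add_assoc, hidem]

theorem mul_le_dotProduct_self (hidem : ∀ a : L, a + a = a)
    (hAG : ∀ x y : L, x * y + (x * x + y * y) = x * x + y * y) {κ : Type*} [Fintype κ]
    (u : κ → L) (k l : κ) : u k * u l ≼ u ⬝ᵥ u :=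
  le_trans (hAG _ _) <| add_le (single_le_sum hidem (fun i => u i * u i) (Finset.mem_univ k))
    (single_le_sum hidem (fun i => u i * u i) (Finset.mem_univ l))

theorem dotProduct_mul_self_le (hidem : ∀ a : L, a + a = a)
    (hAG : ∀ x y : L, x * y + (x * x + y * y) = x * x + y * y) {κ : Type*} [Fintype κ]
    (u v : κ → L) : (u ⬝ᵥ v) * (u ⬝ᵥ v) ≼ (u ⬝ᵥ u) * (v ⬝ᵥ v) := by
  rw [dotProduct, Finset.sum_mul_sum]
  refine sum_le _ fun k _ => sum_le _ fun l _ => ?_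
  rw [mul_mul_mul_comm (u k) (v k)]
  exact mul_le_mul (mul_le_dotProduct_self hidem hAG u k l)
    (mul_le_dotProduct_self hidem hAG v k l)

theorem le_of_mul_self_le_mul_self (hidem : ∀ a : L, a + a = a)
    (hsq : ∀ x : L, ∃! c : L, c * c = x)
    (htot : ∀ x y : L, x ≼ y ∨ y ≼ x) {x y : L} (h : x * x ≼ y * y) : x ≼ y := by
  rcases htot x y with hxy | hyx
  · exact hxy
  · have hsq_eq : x * x = y * y := by
      rw [← mul_le_mul hyx hyx, add_comm, h]
    rw [(hsq (y * y)).unique hsq_eq rfl, hidem]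

theorem exists_eq_mul_of_mul_self_le (hidem : ∀ a : L, a + a = a)
    (habs : ∀ a b : L, a + a * b = a) (hLI : ∀ x y : L, x ≼ y → ∃ z : L, x = y * z)
    (hsq : ∀ x : L, ∃! c : L, c * c = x) (htot : ∀ x y : L, x ≼ y ∨ y ≼ x)
    {x p q : L} (h : x * x ≼ p * p * (q * q)) : ∃ e, x = p * e ∧ e * e ≼ q * q := by
  have hx : x ≼ p * q :=
    le_of_mul_self_le_mul_self hidem hsq htot (by rwa [mul_mul_mul_comm p q])
  obtain ⟨z, rfl⟩ := hLI _ _ hx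
  refine ⟨q * z, by ring, ?_⟩
  rw [mul_mul_mul_comm, add_comm, habs]

theorem exists_gram_entry_eq_mul (hidem : ∀ a : L, a + a = a)
    (habs : ∀ a b : L, a + a * b = a) (hLI : ∀ x y : L, x ≼ y → ∃ z : L, x = y * z)
    (hsq : ∀ x : L, ∃! c : L, c * c = x)
    (hAG : ∀ x y : L, x * y + (x * x + y * y) = x * x + y * y)
    (htot : ∀ x y : L, x ≼ y ∨ y ≼ x) {ι κ : Type*} [Fintype κ] (B : Matrix ι κ L)
    {p : ι → L} (hp : ∀ i, p i * p i = (B * Bᵀ) i i) (i j : ι) :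
    ∃ e, (B * Bᵀ) i j = p i * e ∧ e * e ≼ (B * Bᵀ) j j := by
  have hentry : ∀ k l, B k ⬝ᵥ B l = (B * Bᵀ) k l := fun _ _ => rfl
  have hCS := dotProduct_mul_self_le hidem hAG (B i) (B j)
  rw [hentry, hentry, hentry, ← hp, ← hp] at hCS
  rw [← hp]
  exact exists_eq_mul_of_mul_self_le hidem habs hLI hsq htot hCS

theorem exists_eq_mul_transpose_fin_two {A : Matrix (Fin 2) (Fin 2) L} (hA : A.IsSymm)
    {p : Fin 2 → L} (hp : ∀ i, p i * p i = A i i)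
    (hfac : ∀ i j, ∃ e, A i j = p i * e ∧ e * e ≼ A j j) :
    ∃ B : Matrix (Fin 2) (Fin 2) L, A = B * Bᵀ := by
  obtain ⟨e, he, he'⟩ := hfac 0 1
  refine ⟨!![p 0, 0; e, p 1], ?_⟩
  ext i j
  fin_cases i <;> fin_cases j <;>
    simp [mul_apply, Fin.sum_univ_two, hp, he, he', hA.apply 0 1, mul_comm e]

theorem exists_eq_mul_transpose_fin_three {A : Matrix (Fin 3) (Fin 3) L} (hA : A.IsSymm)
    {p : Fin 3 → L} (hp : ∀ i, p i * p i = A i i)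
    (hfac : ∀ i j, ∃ e, A i j = p i * e ∧ e * e ≼ A j j) :
    ∃ B : Matrix (Fin 3) (Fin 3) L, A = B * Bᵀ := by
  obtain ⟨e, he, he'⟩ := hfac 0 1
  obtain ⟨f, hf, hf'⟩ := hfac 1 2
  obtain ⟨g, hg, hg'⟩ := hfac 2 0
  -- rows `i` and `i + 1 (mod 3)` overlap only where `p i` meets the factor of `A i (i + 1)`
  refine ⟨!![p 0, g, 0; e, 0, p 1; 0, p 2, f], ?_⟩
  ext i j
  fin_cases i <;> fin_cases j <;>
    simp [mul_apply, Fin.sum_univ_three, hp, he, hf, hg, he', hf', add_comm (A _ _), hg',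
      hA.apply 0 1, hA.apply 1 2, hA.apply 2 0, mul_comm e, mul_comm f, mul_comm g]

end Incline

/-- Over a totally ordered normal incline, every n×n completely
positive matrix with n ∈ {2,3} has CP-rank at most n. -/
theorem stmt_9 {L : Type*} [CommSemiring L]
    (hidem : ∀ a : L, a + a = a)
    (habs : ∀ a b : L, a + a * b = a)
    (hLI : ∀ x y : L, x + y = y → ∃ z : L, x = y * z)
    (hsq : ∀ x : L, ∃! c : L, c * c = x)
    (hAG : ∀ x y : L, x * y + (x * x + y * y) = x * x + y * y)
    (htot : ∀ x y : L, x + y = y ∨ y + x = x)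
    (n : ℕ) (hn : n = 2 ∨ n = 3)
    (A : Matrix (Fin n) (Fin n) L)
    (hcp : ∃ m : ℕ, ∃ B : Matrix (Fin n) (Fin m) L, A = B * Bᵀ) :
    ∃ B' : Matrix (Fin n) (Fin n) L, A = B' * B'ᵀ := by
  obtain ⟨m, B, rfl⟩ := hcp
  choose p hp using fun i => (hsq ((B * Bᵀ) i i)).exists
  have hsymm : (B * Bᵀ).IsSymm := by rw [IsSymm, transpose_mul, transpose_transpose]
  have hfac := Incline.exists_gram_entry_eq_mul hidem habs hLI hsq hAG htot B hp
  rcases hn with rfl | rfl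
  · exact Incline.exists_eq_mul_transpose_fin_two hsymm hp hfac
  · exact Incline.exists_eq_mul_transpose_fin_three hsymm hp hfac
end

section
/- Let L be a totally ordered normal incline and let A be a 3×3 completely positive matrix over L. Then at least two of the following three inequalities hold: A₁₁ * A₂₃ ≥ A₁₂ * A₁₃, A₂₂ * A₁₃ ≥ A₁₂ * A₂₃, and A₃₃ * A₁₂ ≥ A₁₃ * A₂₃ (inequalities are with respect to the incline order). -/
/-!
With idempotent addition and a total incline order, a finite sum is the largest of its terms.
Hence an off-diagonal entry `(B Bᵀ)ᵢⱼ` equals a single product `bᵢₚ bⱼₚ`, while `bᵢₚ² ≤ Aᵢᵢ` and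
`bⱼₚ² ≤ Aⱼⱼ`. Comparing `bⱼₚ Aᵢₖ` with `bᵢₚ Aⱼₖ` yields `Aᵢⱼ Aᵢₖ ≤ Aᵢᵢ Aⱼₖ` or
`Aᵢⱼ Aⱼₖ ≤ Aⱼⱼ Aᵢₖ`. Each of the three pairs of inequalities therefore contains a true one,
so at most one of the three fails.
-/

open Matrix

local notation:50 x:51 " ≼ " y:51 => x + y = y

section Incline

variable {L : Type*}

theorem incline_le_trans [AddSemigroup L] {x y z : L} (hxy : x ≼ y) (hyz : y ≼ z) : x ≼ z :=
  calc x + z = x + (y + z) := by rw [hyz]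
    _ = y + z := by rw [← add_assoc, hxy]
    _ = z := hyz

theorem single_incline_le_sum [AddCommMonoid L] (hidem : ∀ a : L, a + a = a)
    {ι : Type*} [Fintype ι] (f : ι → L) (j : ι) : f j ≼ ∑ k, f k := by
  classical
  rw [← Finset.add_sum_erase _ f (Finset.mem_univ j), ← add_assoc, hidem]

theorem exists_sum_eq_of_total [AddCommMonoid L] (htot : ∀ x y : L, x ≼ y ∨ y ≼ x)
    {ι : Type*} (s : Finset ι) (hs : s.Nonempty) (f : ι → L) : ∃ p, ∑ k ∈ s, f k = f p := by
  induction hs using Finset.Nonempty.cons_induction with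
  | singleton a => exact ⟨a, Finset.sum_singleton f a⟩
  | cons a s _ _ ih =>
    obtain ⟨p, hp⟩ := ih
    rw [Finset.sum_cons, hp]
    rcases htot (f a) (f p) with h | h
    · exact ⟨p, h⟩
    · exact ⟨a, by rw [add_comm, h]⟩

theorem mul_mul_incline_le [CommSemiring L] {x y d s t : L} (hx : x * x ≼ d)
    (h : y * s ≼ x * t) : x * y * s ≼ d * t := by
  have hxy : x * y * s ≼ x * x * t :=
    calc x * y * s + x * x * t = x * (y * s + x * t) := by ring
      _ = x * x * t := by rw [h, mul_assoc]
  exact incline_le_trans hxy (by rw [← add_mul, hx])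

theorem gram_offDiag_incline_le_or [CommSemiring L] (hidem : ∀ a : L, a + a = a)
    (htot : ∀ x y : L, x ≼ y ∨ y ≼ x) {n ι : Type*} [Fintype ι] {A : Matrix n n L}
    {B : Matrix n ι L} (hAB : A = B * Bᵀ) (i j k : n) :
    A i j * A i k ≼ A i i * A j k ∨ A i j * A j k ≼ A j j * A i k := by
  have hA : ∀ a b, A a b = ∑ q, B a q * B b q := fun a b => by
    simp only [hAB, mul_apply, transpose_apply]
  cases isEmpty_or_nonempty ι
  · simp [hA]
  obtain ⟨p, hp⟩ := exists_sum_eq_of_total htot Finset.univ Finset.univ_nonempty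
    fun q => B i q * B j q
  have hij : A i j = B i p * B j p := (hA i j).trans hp
  have hii : B i p * B i p ≼ A i i := by
    rw [hA]; exact single_incline_le_sum hidem (fun q => B i q * B i q) p
  have hjj : B j p * B j p ≼ A j j := by
    rw [hA]; exact single_incline_le_sum hidem (fun q => B j q * B j q) p
  rcases htot (B j p * A i k) (B i p * A j k) with h | h
  · left
    rw [hij]
    exact mul_mul_incline_le hii h
  · right
    rw [hij, mul_comm (B i p)]
    exact mul_mul_incline_le hjj h

end Incline

theorem stmt_15_general {L : Type*} [CommSemiring L]
    (hidem : ∀ a : L, a + a = a)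
    (htot : ∀ x y : L, x + y = y ∨ y + x = x)
    (A : Matrix (Fin 3) (Fin 3) L)
    (hcp : ∃ m : ℕ, ∃ B : Matrix (Fin 3) (Fin m) L, A = B * Bᵀ) :
    (A 0 1 * A 0 2 + A 0 0 * A 1 2 = A 0 0 * A 1 2 ∧
       A 0 1 * A 1 2 + A 1 1 * A 0 2 = A 1 1 * A 0 2) ∨
    (A 0 1 * A 0 2 + A 0 0 * A 1 2 = A 0 0 * A 1 2 ∧
       A 0 2 * A 1 2 + A 2 2 * A 0 1 = A 2 2 * A 0 1) ∨
    (A 0 1 * A 1 2 + A 1 1 * A 0 2 = A 1 1 * A 0 2 ∧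
       A 0 2 * A 1 2 + A 2 2 * A 0 1 = A 2 2 * A 0 1) := by
  obtain ⟨m, B, hAB⟩ := hcp
  have hsymm : ∀ a b, A b a = A a b := fun a b => by
    rw [← transpose_apply A, hAB, transpose_mul, transpose_transpose]
  have h012 := gram_offDiag_incline_le_or hidem htot hAB 0 1 2
  have h021 := gram_offDiag_incline_le_or hidem htot hAB 0 2 1
  have h120 := gram_offDiag_incline_le_or hidem htot hAB 1 2 0
  rw [hsymm 1 2, mul_comm (A 0 2)] at h021
  rw [hsymm 0 1, hsymm 0 2, mul_comm (A 1 2) (A 0 1), mul_comm (A 1 2) (A 0 2)] at h120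
  tauto

/-- For a 3×3 completely positive matrix over a totally ordered
normal incline, at least two of the three inequalities
`A₁₁*A₂₃ ≥ A₁₂*A₁₃`, `A₂₂*A₁₃ ≥ A₁₂*A₂₃`, `A₃₃*A₁₂ ≥ A₁₃*A₂₃` hold
(w.r.t. the incline order `x ≤ y ↔ x + y = y`). -/
theorem stmt_15 {L : Type*} [CommSemiring L]
    (hidem : ∀ a : L, a + a = a)
    (habs : ∀ a b : L, a + a * b = a)
    (hLI : ∀ x y : L, x + y = y → ∃ z : L, x = y * z)
    (hsq : ∀ x : L, ∃! c : L, c * c = x)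
    (hAG : ∀ x y : L, x * y + (x * x + y * y) = x * x + y * y)
    (htot : ∀ x y : L, x + y = y ∨ y + x = x)
    (A : Matrix (Fin 3) (Fin 3) L)
    (hcp : ∃ m : ℕ, ∃ B : Matrix (Fin 3) (Fin m) L, A = B * Bᵀ) :
    (A 0 1 * A 0 2 + A 0 0 * A 1 2 = A 0 0 * A 1 2 ∧
       A 0 1 * A 1 2 + A 1 1 * A 0 2 = A 1 1 * A 0 2) ∨
    (A 0 1 * A 0 2 + A 0 0 * A 1 2 = A 0 0 * A 1 2 ∧
       A 0 2 * A 1 2 + A 2 2 * A 0 1 = A 2 2 * A 0 1) ∨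
    (A 0 1 * A 1 2 + A 1 1 * A 0 2 = A 1 1 * A 0 2 ∧
       A 0 2 * A 1 2 + A 2 2 * A 0 1 = A 2 2 * A 0 1) :=
  stmt_15_general hidem htot A hcp
end
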